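/- Let n ≥ 3 and a ≥ 2 be integers and let a₃,…,aₙ be integers with a_i > a for each 3 ≤ i ≤ n. The tangent cone at the origin of the Brieskorn variety X = {z ∈ ℂⁿ : z₁^a + z₂^a + Σ_{i=3}^n z_i^{a_i} = 0} equals {z ∈ ℂⁿ : z₁^a + z₂^a = 0}, i.e. the union of the a complex hyperplanes {z₁ = ξz₂} over the a-th roots ξ of −1. -/

import Mathlib

/-!
If `x + d ∈ X` with `c • d → v` and `d → 0`, multiplying the equation by `c ^ a` gives
`∑ (c dᵢ) ^ a * dᵢ ^ (eᵢ - a) = 0`; in the limit the factors `dᵢ ^ (eᵢ - a)` with `eᵢ > a` vanish,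
leaving `∑_{eᵢ = a} vᵢ ^ a = 0`. Conversely, if `v` satisfies this equation, then `t • v` lies on
`X` up to terms of order `t ^ (a + 1)`; replacing the coordinate `v i₀` (where `e i₀ = a`) by a
suitable `a`-th root `w t → v i₀` puts `t • u t` exactly on `X`, with `u t → v`.
-/

open Filter Topology

theorem Complex.exists_tendsto_pow_eq {α : Type*} {l : Filter α} {a : ℕ} (ha : a ≠ 0)
    {x : ℂ} {y : α → ℂ} (hy : Tendsto y l (𝓝 (x ^ a))) :
    ∃ w : α → ℂ, (∀ m, w m ^ a = y m) ∧ Tendsto w l (𝓝 x) := by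
  rcases eq_or_ne x 0 with rfl | hx
  · rw [zero_pow ha] at hy
    refine ⟨fun m => y m ^ (a⁻¹ : ℂ), fun m => cpow_nat_inv_pow _ ha, ?_⟩
    have hre : 0 < (a⁻¹ : ℂ).re := by simp [Nat.pos_of_ne_zero ha]
    have := (continuousAt_cpow_const_of_re_pos (z := 0) (Or.inl le_rfl) hre).tendsto.comp hy
    simpa [Function.comp_def, zero_cpow (inv_ne_zero (Nat.cast_ne_zero.mpr ha))] using this
  · have hxa : x ^ a ≠ 0 := pow_ne_zero a hx
    refine ⟨fun m => x * (y m / x ^ a) ^ (a⁻¹ : ℂ), fun m => ?_, ?_⟩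
    · rw [mul_pow, cpow_nat_inv_pow _ ha, mul_div_cancel₀ _ hxa]
    · have hquot : Tendsto (fun m => y m / x ^ a) l (𝓝 1) := div_self hxa ▸ hy.div_const _
      simpa using ((continuousAt_cpow_const one_mem_slitPlane).tendsto.comp hquot).const_mul x

theorem mul_pow_eq_pow_mul_pow_mul_pow_sub {M : Type*} [CommMonoid M] {a e : ℕ} (hae : a ≤ e)
    (t x : M) : (t * x) ^ e = t ^ a * (x ^ a * (t * x) ^ (e - a)) := by
  rw [← mul_assoc, ← mul_pow, pow_mul_pow_sub _ hae]

theorem Fintype.sum_apply_update {ι α M : Type*} [Fintype ι] [DecidableEq ι] [AddCommGroup M]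
    (f : ι → α → M) (x : ι → α) (i₀ : ι) (y : α) :
    ∑ i, f i (Function.update x i₀ y i) = ∑ i, f i (x i) - f i₀ (x i₀) + f i₀ y := by
  simp_rw [Function.apply_update f]
  rw [Finset.sum_update_of_mem (Finset.mem_univ i₀),
    Finset.sum_eq_add_sum_sdiff_singleton_of_mem (Finset.mem_univ i₀)]
  abel

variable {ι : Type*} [Fintype ι] {e : ι → ℕ} {a : ℕ}

theorem tendsto_sum_pow_mul_pow_sub {α : Type*} {l : Filter α} {u s : α → ι → ℂ} {v : ι → ℂ}
    (hea : ∀ i, a ≤ e i) (hu : ∀ i, Tendsto (fun m => u m i) l (𝓝 (v i)))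
    (hs : ∀ i, Tendsto (fun m => s m i) l (𝓝 0)) :
    Tendsto (fun m => ∑ i, u m i ^ a * s m i ^ (e i - a)) l (𝓝 (∑ i with e i = a, v i ^ a)) := by
  have hlim : ∑ i, v i ^ a * 0 ^ (e i - a) = ∑ i with e i = a, v i ^ a := by
    rw [Finset.sum_filter]
    refine Finset.sum_congr rfl fun i _ => ?_
    simp only [zero_pow_eq, Nat.sub_eq_zero_iff_le, (hea i).ge_iff_eq']
    split_ifs <;> simp
  exact hlim ▸ tendsto_finsetSum _ fun i _ => ((hu i).pow a).mul ((hs i).pow _)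

theorem tangentConeAt_setOf_sum_pow_eq_zero_subset (hea : ∀ i, a ≤ e i) :
    tangentConeAt ℝ {z : EuclideanSpace ℂ ι | ∑ i, z i ^ e i = 0} 0 ⊆
      {z | ∑ i with e i = a, z i ^ a = 0} := by
  intro v hv
  obtain ⟨α, l, hl, c, d, hd, hds, hcd⟩ := exists_fun_of_mem_tangentConeAt hv
  have hcoord {f : α → EuclideanSpace ℂ ι} {z : EuclideanSpace ℂ ι} (hf : Tendsto f l (𝓝 z))
      (i : ι) : Tendsto (fun m => f m i) l (𝓝 (z i)) :=
    ((PiLp.continuous_apply 2 _ i).tendsto _).comp hf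
  refine tendsto_nhds_unique (tendsto_sum_pow_mul_pow_sub hea (hcoord hcd) (hcoord hd))
    (tendsto_const_nhds.congr' ?_)
  filter_upwards [hds] with m hm
  rw [zero_add] at hm
  calc 0 = (c m : ℂ) ^ a * ∑ i, d m i ^ e i := by rw [hm, mul_zero]
    _ = ∑ i, (c m • d m) i ^ a * d m i ^ (e i - a) := by
      rw [Finset.mul_sum]
      refine Finset.sum_congr rfl fun i _ => ?_
      rw [PiLp.smul_apply, Complex.real_smul, mul_pow, mul_assoc, pow_mul_pow_sub _ (hea i)]

theorem setOf_sum_pow_eq_zero_subset_tangentConeAt (ha : a ≠ 0)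
    (hea : ∀ i, a ≤ e i) {i₀ : ι} (hi₀ : e i₀ = a) :
    {z : EuclideanSpace ℂ ι | ∑ i with e i = a, z i ^ a = 0} ⊆
      tangentConeAt ℝ {z : EuclideanSpace ℂ ι | ∑ i, z i ^ e i = 0} 0 := by
  classical
  intro v hv
  obtain ⟨F, hF⟩ : ∃ F : ℝ → ι → ℂ → ℂ, ∀ t i x, F t i x = x ^ a * ((t : ℂ) * x) ^ (e i - a) :=
    ⟨_, fun _ _ _ => rfl⟩
  have hFi₀ (t : ℝ) (x : ℂ) : F t i₀ x = x ^ a := by rw [hF, hi₀, Nat.sub_self, pow_zero, mul_one]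
  have hFv : Tendsto (fun t => ∑ i, F t i (v i)) (𝓝[≠] 0) (𝓝 0) := by
    have ht : Tendsto (fun t : ℝ => (t : ℂ)) (𝓝[≠] 0) (𝓝 0) := by
      simpa using (Complex.continuous_ofReal.tendsto 0).mono_left nhdsWithin_le_nhds
    simp_rw [hF]
    exact hv ▸ tendsto_sum_pow_mul_pow_sub hea (fun i => tendsto_const_nhds)
      (fun i => by simpa using ht.mul_const (v i))
  obtain ⟨w, hw, hwv⟩ := Complex.exists_tendsto_pow_eq ha
    (y := fun t => v i₀ ^ a - ∑ i, F t i (v i)) (by simpa using tendsto_const_nhds.sub hFv)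
  set u : ℝ → EuclideanSpace ℂ ι := fun t => WithLp.toLp 2 (Function.update v i₀ (w t))
  have hu : Tendsto u (𝓝[≠] 0) (𝓝 v) := by
    simpa [u, Function.comp_def] using ((PiLp.continuous_toLp 2 _).tendsto _).comp
      (tendsto_const_nhds (x := v.ofLp).update i₀ hwv)
  have hFu (t : ℝ) : ∑ i, F t i (u t i) = 0 := by
    rw [Fintype.sum_apply_update, hFi₀, hFi₀, hw]
    ring
  refine mem_tangentConeAt_of_seq (𝓝[≠] 0) (fun t => t⁻¹) (fun t => t • u t) ?_ ?_ ?_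
  · simpa using (tendsto_id.mono_left nhdsWithin_le_nhds).smul hu
  · refine .of_forall fun t => ?_
    simp only [zero_add, Set.mem_ofPred_eq, PiLp.smul_apply, Complex.real_smul]
    simp_rw [mul_pow_eq_pow_mul_pow_mul_pow_sub (hea _), ← Finset.mul_sum, ← hF]
    rw [hFu t, mul_zero]
  · refine hu.congr' ?_
    filter_upwards [self_mem_nhdsWithin] with t ht
    rw [inv_smul_smul₀ ht]

theorem tangentConeAt_setOf_sum_pow_eq_zero (ha : a ≠ 0) (hea : ∀ i, a ≤ e i) {i₀ : ι}
    (hi₀ : e i₀ = a) :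
    tangentConeAt ℝ {z : EuclideanSpace ℂ ι | ∑ i, z i ^ e i = 0} 0 =
      {z | ∑ i with e i = a, z i ^ a = 0} :=
  (tangentConeAt_setOf_sum_pow_eq_zero_subset hea).antisymm
    (setOf_sum_pow_eq_zero_subset_tangentConeAt ha hea hi₀)

/-- The tangent cone at the origin of the Brieskorn variety
`X = {z₁^a + z₂^a + Σ_{i≥3} z_i^{a_i} = 0}` (with `a_i > a` for `i ≥ 3`) equals
`{z : z₁^a + z₂^a = 0}`, the union of the `a` hyperplanes `{z₁ = ξz₂}` over the
`a`-th roots `ξ` of `−1`. -/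
theorem stmt_13 (n a : ℕ) (hn : 3 ≤ n) (ha : 2 ≤ a)
    (e : Fin n → ℕ) (he0 : e ⟨0, by omega⟩ = a) (he1 : e ⟨1, by omega⟩ = a)
    (he : ∀ i : Fin n, 2 ≤ (i : ℕ) → a < e i) :
    tangentConeAt ℝ {z : EuclideanSpace ℂ (Fin n) | ∑ i, z i ^ e i = 0} 0
      = {z : EuclideanSpace ℂ (Fin n) |
          z ⟨0, by omega⟩ ^ a + z ⟨1, by omega⟩ ^ a = 0} := by
  have hea (i : Fin n) : a ≤ e i := by
    rcases i with ⟨_ | _ | k, hk⟩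
    exacts [he0.ge, he1.ge, (he _ (by simp)).le]
  have hP : ({i | e i = a} : Finset (Fin n)) = {⟨0, by omega⟩, ⟨1, by omega⟩} := by
    ext ⟨_ | _ | k, hk⟩
    · simpa using he0
    · simpa using he1
    · simpa using (he ⟨k + 2, hk⟩ (by simp)).ne'
  rw [tangentConeAt_setOf_sum_pow_eq_zero (by omega) hea he0, hP]
  have h01 : (⟨0, by omega⟩ : Fin n) ≠ ⟨1, by omega⟩ := by simp
  simp_rw [Finset.sum_pair h01]
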